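/- arXiv:1507.02358 — 7 statements merged into one kernel-verified Lean document; each statement's English description precedes it below -/
import Mathlib

section
/- The maximal steered coherence is invariant under local unitaries: for a bipartite state ρ with non-degenerate ρ_B and any unitaries U_A, U_B, 𝒞((U_A⊗U_B) ρ (U_A⊗U_B)†) = 𝒞(ρ), where 𝒞(ρ) = sup over POVM elements M of the coherence of the steered state ρ_B^M in the eigenbasis of ρ_B. -/
/-!
Conjugation `M ↦ U_Aᴴ M U_A` permutes the POVM elements on `A`, and for every `M` the
unnormalised steered state of `ρ' = (U_A ⊗ U_B) ρ (U_A ⊗ U_B)ᴴ` is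
`tr_A ((M ⊗ 1) ρ') = U_B tr_A (((U_Aᴴ M U_A) ⊗ 1) ρ) U_Bᴴ`.
Its entries in the rotated basis `U_B ξ` are those of `tr_A (((U_Aᴴ M U_A) ⊗ 1) ρ)` in `ξ`, and
its trace is unchanged, so both suprema range over the same set of values.
-/

open Matrix BigOperators Kronecker ComplexOrder

noncomputable section

def ptraceA {dA dB : ℕ} (ρ : Matrix (Fin dA × Fin dB) (Fin dA × Fin dB) ℂ) :
    Matrix (Fin dB) (Fin dB) ℂ :=
  fun j j' => ∑ a, ρ (a, j) (a, j')

def IsPOVMElem {d : ℕ} (M : Matrix (Fin d) (Fin d) ℂ) : Prop :=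
  M.PosSemidef ∧ (1 - M).PosSemidef

/-- Maximal steered coherence of ρ with respect to the eigenbasis ξ of ρ_B:
the supremum over POVM elements M of the l1-coherence of the steered state. -/
def msc {dA dB : ℕ} (ρ : Matrix (Fin dA × Fin dB) (Fin dA × Fin dB) ℂ)
    (ξ : Fin dB → (Fin dB → ℂ)) : ℝ :=
  sSup {c | ∃ M : Matrix (Fin dA) (Fin dA) ℂ, IsPOVMElem M ∧
    0 < (((M ⊗ₖ (1 : Matrix (Fin dB) (Fin dB) ℂ)) * ρ).trace).re ∧
    c = (∑ i, ∑ j ∈ Finset.univ.filter (· ≠ i),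
          ‖star (ξ i) ⬝ᵥ (ptraceA ((M ⊗ₖ 1) * ρ) *ᵥ ξ j)‖) /
        (((M ⊗ₖ (1 : Matrix (Fin dB) (Fin dB) ℂ)) * ρ).trace).re}

section PartialTrace

variable {dA dB : ℕ}

lemma trace_ptraceA (X : Matrix (Fin dA × Fin dB) (Fin dA × Fin dB) ℂ) :
    (ptraceA X).trace = X.trace := by
  simp only [Matrix.trace, ptraceA, Matrix.diag, Fintype.sum_prod_type]
  exact Finset.sum_comm

lemma ptraceA_one_kronecker_mul (B : Matrix (Fin dB) (Fin dB) ℂ)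
    (X : Matrix (Fin dA × Fin dB) (Fin dA × Fin dB) ℂ) :
    ptraceA (((1 : Matrix (Fin dA) (Fin dA) ℂ) ⊗ₖ B) * X) = B * ptraceA X := by
  ext j j'
  simp only [ptraceA, mul_apply, kroneckerMap_apply, Fintype.sum_prod_type_right, one_apply,
    ite_mul, one_mul, zero_mul, Finset.sum_ite_eq, Finset.mem_univ, if_true, Finset.mul_sum]
  exact Finset.sum_comm

lemma ptraceA_mul_one_kronecker (X : Matrix (Fin dA × Fin dB) (Fin dA × Fin dB) ℂ)
    (D : Matrix (Fin dB) (Fin dB) ℂ) :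
    ptraceA (X * ((1 : Matrix (Fin dA) (Fin dA) ℂ) ⊗ₖ D)) = ptraceA X * D := by
  ext j j'
  simp only [ptraceA, mul_apply, kroneckerMap_apply, Fintype.sum_prod_type_right, one_apply,
    mul_ite, ite_mul, one_mul, zero_mul, mul_zero, Finset.sum_ite_eq', Finset.mem_univ,
    if_true, Finset.sum_mul]
  exact Finset.sum_comm

lemma ptraceA_kronecker_one_mul_comm (A : Matrix (Fin dA) (Fin dA) ℂ)
    (X : Matrix (Fin dA × Fin dB) (Fin dA × Fin dB) ℂ) :
    ptraceA ((A ⊗ₖ (1 : Matrix (Fin dB) (Fin dB) ℂ)) * X) =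
      ptraceA (X * (A ⊗ₖ (1 : Matrix (Fin dB) (Fin dB) ℂ))) := by
  ext j j'
  simp only [ptraceA, mul_apply, kroneckerMap_apply, Fintype.sum_prod_type, one_apply, mul_ite,
    ite_mul, mul_one, zero_mul, mul_zero, Finset.sum_ite_eq', Finset.sum_ite_eq,
    Finset.mem_univ, if_true]
  rw [Finset.sum_comm]
  exact Finset.sum_congr rfl fun _ _ => Finset.sum_congr rfl fun _ _ => mul_comm _ _

end PartialTrace

lemma Matrix.star_mulVec_dotProduct_conj_mulVec {n α : Type*} [Fintype n] [DecidableEq n]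
    [CommRing α] [StarRing α] {V : Matrix n n α} (hV : V ∈ unitaryGroup n α)
    (Y : Matrix n n α) (x y : n → α) :
    star (V *ᵥ x) ⬝ᵥ ((V * Y * Vᴴ) *ᵥ (V *ᵥ y)) = star x ⬝ᵥ (Y *ᵥ y) := by
  have hV' : Vᴴ * V = 1 := Unitary.star_mul_self_of_mem hV
  rw [star_mulVec, mulVec_mulVec, Matrix.mul_assoc, Matrix.mul_assoc, hV', Matrix.mul_one,
    dotProduct_mulVec, vecMul_vecMul, ← Matrix.mul_assoc, hV', Matrix.one_mul,
    ← dotProduct_mulVec]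

lemma isPOVMElem_conjTranspose_mul_mul_iff {d : ℕ} {U : Matrix (Fin d) (Fin d) ℂ}
    (hU : U ∈ unitaryGroup (Fin d) ℂ) {M : Matrix (Fin d) (Fin d) ℂ} :
    IsPOVMElem (Uᴴ * M * U) ↔ IsPOVMElem M := by
  have hunit : IsUnit U := Unitary.isUnit_coe (U := ⟨U, hU⟩)
  have hsub : 1 - Uᴴ * M * U = Uᴴ * (1 - M) * U := by
    rw [Matrix.mul_sub, Matrix.sub_mul, Matrix.mul_one, ← star_eq_conjTranspose,
      Unitary.star_mul_self_of_mem hU]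
  rw [IsPOVMElem, IsPOVMElem, hsub, ← star_eq_conjTranspose,
    hunit.posSemidef_star_left_conjugate_iff, hunit.posSemidef_star_left_conjugate_iff]

section LocalUnitary

variable {dA dB : ℕ}

lemma ptraceA_kronecker_one_mul_kronecker_conj (M U : Matrix (Fin dA) (Fin dA) ℂ)
    (V : Matrix (Fin dB) (Fin dB) ℂ) (ρ : Matrix (Fin dA × Fin dB) (Fin dA × Fin dB) ℂ) :
    ptraceA ((M ⊗ₖ (1 : Matrix (Fin dB) (Fin dB) ℂ)) * ((U ⊗ₖ V) * ρ * (U ⊗ₖ V)ᴴ)) =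
      V * ptraceA (((Uᴴ * M * U) ⊗ₖ (1 : Matrix (Fin dB) (Fin dB) ℂ)) * ρ) * Vᴴ := by
  have hsplit : (M ⊗ₖ (1 : Matrix (Fin dB) (Fin dB) ℂ)) * ((U ⊗ₖ V) * ρ * (U ⊗ₖ V)ᴴ) =
      ((1 : Matrix (Fin dA) (Fin dA) ℂ) ⊗ₖ V) * ((((M * U) ⊗ₖ 1) * ρ) * (Uᴴ ⊗ₖ 1)) *
        (1 ⊗ₖ Vᴴ) := by
    simp only [conjTranspose_kronecker, Matrix.mul_assoc, ← mul_kronecker_mul]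
    simp only [← Matrix.mul_assoc, ← mul_kronecker_mul, Matrix.one_mul, Matrix.mul_one]
  rw [hsplit, ptraceA_mul_one_kronecker, ptraceA_one_kronecker_mul,
    ← ptraceA_kronecker_one_mul_comm, ← Matrix.mul_assoc, ← mul_kronecker_mul, Matrix.one_mul,
    Matrix.mul_assoc Uᴴ]

lemma trace_kronecker_one_mul_kronecker_conj (M U : Matrix (Fin dA) (Fin dA) ℂ)
    {V : Matrix (Fin dB) (Fin dB) ℂ} (hV : V ∈ unitaryGroup (Fin dB) ℂ)
    (ρ : Matrix (Fin dA × Fin dB) (Fin dA × Fin dB) ℂ) :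
    ((M ⊗ₖ (1 : Matrix (Fin dB) (Fin dB) ℂ)) * ((U ⊗ₖ V) * ρ * (U ⊗ₖ V)ᴴ)).trace =
      (((Uᴴ * M * U) ⊗ₖ (1 : Matrix (Fin dB) (Fin dB) ℂ)) * ρ).trace := by
  rw [← trace_ptraceA, ptraceA_kronecker_one_mul_kronecker_conj, trace_mul_cycle,
    ← star_eq_conjTranspose, Unitary.star_mul_self_of_mem hV, Matrix.one_mul, trace_ptraceA]

theorem msc_kronecker_conj (ρ : Matrix (Fin dA × Fin dB) (Fin dA × Fin dB) ℂ)
    (ξ : Fin dB → (Fin dB → ℂ))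
    {U : Matrix (Fin dA) (Fin dA) ℂ} (hU : U ∈ unitaryGroup (Fin dA) ℂ)
    {V : Matrix (Fin dB) (Fin dB) ℂ} (hV : V ∈ unitaryGroup (Fin dB) ℂ) :
    msc ((U ⊗ₖ V) * ρ * (U ⊗ₖ V)ᴴ) (fun i => V *ᵥ ξ i) = msc ρ ξ := by
  have hconj : ∀ N, Uᴴ * (U * N * Uᴴ) * U = N := fun N => by
    simp only [← star_eq_conjTranspose, ← Matrix.mul_assoc, Unitary.star_mul_self_of_mem hU,
      Matrix.one_mul]
    rw [Matrix.mul_assoc, Unitary.star_mul_self_of_mem hU, Matrix.mul_one]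
  unfold msc
  simp only [trace_kronecker_one_mul_kronecker_conj _ _ hV, ptraceA_kronecker_one_mul_kronecker_conj,
    Matrix.star_mulVec_dotProduct_conj_mulVec hV]
  congr 1
  ext c
  constructor
  · rintro ⟨M, hM, hc⟩
    exact ⟨Uᴴ * M * U, (isPOVMElem_conjTranspose_mul_mul_iff hU).2 hM, hc⟩
  · rintro ⟨N, hN, hc⟩
    refine ⟨U * N * Uᴴ, (isPOVMElem_conjTranspose_mul_mul_iff hU).1 ?_, ?_⟩ <;> rwa [hconj]

end LocalUnitary

theorem stmt4_general {dA dB : ℕ}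
    (ρ : Matrix (Fin dA × Fin dB) (Fin dA × Fin dB) ℂ)
    (ξ : Fin dB → (Fin dB → ℂ))
    (U_A : Matrix (Fin dA) (Fin dA) ℂ) (hUA : U_A ∈ Matrix.unitaryGroup (Fin dA) ℂ)
    (U_B : Matrix (Fin dB) (Fin dB) ℂ) (hUB : U_B ∈ Matrix.unitaryGroup (Fin dB) ℂ) :
    msc ((U_A ⊗ₖ U_B) * ρ * (U_A ⊗ₖ U_B)ᴴ) (fun i => U_B *ᵥ ξ i) = msc ρ ξ :=
  msc_kronecker_conj ρ ξ hUA hUB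

/-- maximal steered coherence is invariant under local unitaries. -/
theorem stmt4 {dA dB : ℕ}
    (ρ : Matrix (Fin dA × Fin dB) (Fin dA × Fin dB) ℂ)
    (hρ : ρ.PosSemidef ∧ ρ.trace = 1)
    (ξ : Fin dB → (Fin dB → ℂ))
    (horth : ∀ i j, star (ξ i) ⬝ᵥ ξ j = if i = j then (1 : ℂ) else 0)
    (μ : Fin dB → ℝ) (hμ : Function.Injective μ)
    (heig : ∀ i, ptraceA ρ *ᵥ ξ i = (μ i : ℂ) • ξ i)
    (U_A : Matrix (Fin dA) (Fin dA) ℂ) (hUA : U_A ∈ Matrix.unitaryGroup (Fin dA) ℂ)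
    (U_B : Matrix (Fin dB) (Fin dB) ℂ) (hUB : U_B ∈ Matrix.unitaryGroup (Fin dB) ℂ) :
    msc ((U_A ⊗ₖ U_B) * ρ * (U_A ⊗ₖ U_B)ᴴ) (fun i => U_B *ᵥ ξ i) = msc ρ ξ :=
  stmt4_general ρ ξ U_A hUA U_B hUB
end
end

section
/- For the two-qubit classical state ρ_c = t|++⟩⟨++| + (1−t)|−−⟩⟨−−| with 1/2 < t < 1, after Bob applies the amplitude damping channel with parameter γ ∈ [0,1], the maximal steered coherence of the resulting state equals 2tγ√(1−γ) / √((1−2t)²(1−γ) + γ²). In particular it is 0 at γ = 0 and γ = 1, and strictly positive for 0 < γ < 1. -/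
/-!
The state ρ_c is a mixture of the product states |±±⟩, so after damping Bob's qubit every
correlation tr(ρ' (P ⊗ Q)) is the same mixture of products ⟨±|P|±⟩ · tr(Q Λ(|±⟩⟨±|)).
With q = 2t - 1 and s = √(1 - γ) this gives a = (q, 0, 0), b = (s q, 0, γ) and a matrix T whose
only nonzero row is (s, 0, γ q). For such Bloch data Tᵀm × n_B points along the y-axis and depends
on m only through x = m₀: the objective equals s γ (1 + q) / |b| times (1 - q)|x| / |1 + q x|,
and the last factor is at most 1 on |x| ≤ 1, with equality at x = -1.
-/

open Matrix BigOperators Kronecker ComplexOrder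

noncomputable section

def pauli : Fin 3 → Matrix (Fin 2) (Fin 2) ℂ :=
  ![!![0, 1; 1, 0], !![0, -Complex.I; Complex.I, 0], !![1, 0; 0, -1]]

def cross3 (u v : Fin 3 → ℝ) : Fin 3 → ℝ :=
  ![u 1 * v 2 - u 2 * v 1, u 2 * v 0 - u 0 * v 2, u 0 * v 1 - u 1 * v 0]

def norm3 (v : Fin 3 → ℝ) : ℝ := Real.sqrt (∑ i, v i ^ 2)

def dot3 (u v : Fin 3 → ℝ) : ℝ := ∑ i, u i * v i

def proj {n : Type*} [Fintype n] (x : n → ℂ) : Matrix n n ℂ :=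
  vecMulVec x (star x)

/-- The product vector x ⊗ y. -/
def tensorVec (x y : Fin 2 → ℂ) : Fin 2 × Fin 2 → ℂ := fun p => x p.1 * y p.2

def plusV : Fin 2 → ℂ := ![(Real.sqrt 2)⁻¹, (Real.sqrt 2)⁻¹]
def minusV : Fin 2 → ℂ := ![(Real.sqrt 2)⁻¹, -(Real.sqrt 2)⁻¹]

/-- Kraus operators of the amplitude damping channel. -/
def AD0 (γ : ℝ) : Matrix (Fin 2) (Fin 2) ℂ := !![1, 0; 0, (Real.sqrt (1 - γ) : ℂ)]
def AD1 (γ : ℝ) : Matrix (Fin 2) (Fin 2) ℂ := !![0, (Real.sqrt γ : ℂ); 0, 0]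

lemma mul_proj_mul_conjTranspose {n : Type*} [Fintype n] (K : Matrix n n ℂ) (x : n → ℂ) :
    K * proj x * Kᴴ = proj (K *ᵥ x) := by
  rw [proj, mul_vecMulVec, vecMulVec_mul, proj, star_mulVec]

lemma trace_proj_mul {n : Type*} [Fintype n] (M : Matrix n n ℂ) (x : n → ℂ) :
    (proj x * M).trace = star x ⬝ᵥ (M *ᵥ x) := by
  rw [proj, vecMulVec_mul, trace_vecMulVec, dotProduct_comm, dotProduct_mulVec]

lemma kronecker_mulVec_tensorVec (P Q : Matrix (Fin 2) (Fin 2) ℂ) (x y : Fin 2 → ℂ) :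
    (P ⊗ₖ Q) *ᵥ tensorVec x y = tensorVec (P *ᵥ x) (Q *ᵥ y) := by
  ext p
  simp only [mulVec, dotProduct, tensorVec, kroneckerMap_apply, Fintype.sum_prod_type,
    Fintype.sum_mul_sum]
  exact Finset.sum_congr rfl fun i _ => Finset.sum_congr rfl fun j _ => by ring

lemma star_tensorVec_dotProduct_tensorVec (x y w z : Fin 2 → ℂ) :
    star (tensorVec x y) ⬝ᵥ tensorVec w z = (star x ⬝ᵥ w) * (star y ⬝ᵥ z) := by
  simp only [dotProduct, tensorVec, Pi.star_apply, star_mul', Fintype.sum_prod_type,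
    Fintype.sum_mul_sum]
  exact Finset.sum_congr rfl fun i _ => Finset.sum_congr rfl fun j _ => by ring

lemma trace_kraus_proj_tensorVec_mul_kronecker (K P Q : Matrix (Fin 2) (Fin 2) ℂ)
    (x y : Fin 2 → ℂ) :
    ((1 ⊗ₖ K) * proj (tensorVec x y) * (1 ⊗ₖ K)ᴴ * (P ⊗ₖ Q)).trace =
      (star x ⬝ᵥ (P *ᵥ x)) * (star (K *ᵥ y) ⬝ᵥ (Q *ᵥ (K *ᵥ y))) := by
  rw [mul_proj_mul_conjTranspose, trace_proj_mul, kronecker_mulVec_tensorVec, one_mulVec,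
    kronecker_mulVec_tensorVec, star_tensorVec_dotProduct_tensorVec]

def dampedExpect (γ : ℝ) (Q : Matrix (Fin 2) (Fin 2) ℂ) (y : Fin 2 → ℂ) : ℂ :=
  star (AD0 γ *ᵥ y) ⬝ᵥ (Q *ᵥ (AD0 γ *ᵥ y)) + star (AD1 γ *ᵥ y) ⬝ᵥ (Q *ᵥ (AD1 γ *ᵥ y))

section RealQubit

variable (a b : ℝ)

lemma star_dotProduct_self_ofReal :
    star ![(a : ℂ), b] ⬝ᵥ ![(a : ℂ), b] = ((a ^ 2 + b ^ 2 : ℝ) : ℂ) := by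
  simp [dotProduct, Fin.sum_univ_two, sq]

lemma star_dotProduct_pauli_mulVec_ofReal (j : Fin 3) :
    star ![(a : ℂ), b] ⬝ᵥ (pauli j *ᵥ ![(a : ℂ), b]) =
      ((![2 * a * b, 0, a ^ 2 - b ^ 2] j : ℝ) : ℂ) := by
  fin_cases j <;>
    simp only [pauli, dotProduct, mulVec, Fin.sum_univ_two, Pi.star_apply, Complex.star_def,
      Complex.conj_ofReal, of_apply, cons_val', cons_val_zero, cons_val_one, cons_val_fin_one,
      Fin.zero_eta, Fin.mk_one, Fin.reduceFinMk, cons_val] <;>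
    push_cast <;> ring

variable {γ : ℝ}

lemma AD0_mulVec_ofReal :
    AD0 γ *ᵥ ![(a : ℂ), b] = ![(a : ℂ), ((Real.sqrt (1 - γ) * b : ℝ) : ℂ)] := by
  ext i; fin_cases i <;> simp [AD0, mulVec, dotProduct, Fin.sum_univ_two]

lemma AD1_mulVec_ofReal :
    AD1 γ *ᵥ ![(a : ℂ), b] = ![((Real.sqrt γ * b : ℝ) : ℂ), ((0 : ℝ) : ℂ)] := by
  ext i; fin_cases i <;> simp [AD1, mulVec, dotProduct, Fin.sum_univ_two]

lemma dampedExpect_one_ofReal (hγ0 : 0 ≤ γ) (hγ1 : γ ≤ 1) :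
    dampedExpect γ 1 ![(a : ℂ), b] = ((a ^ 2 + b ^ 2 : ℝ) : ℂ) := by
  rw [dampedExpect, AD0_mulVec_ofReal, AD1_mulVec_ofReal, one_mulVec, one_mulVec,
    star_dotProduct_self_ofReal, star_dotProduct_self_ofReal, ← Complex.ofReal_add]
  congr 1
  grind [Real.sq_sqrt hγ0, Real.sq_sqrt (sub_nonneg.mpr hγ1)]

lemma dampedExpect_pauli_ofReal (hγ0 : 0 ≤ γ) (hγ1 : γ ≤ 1) (j : Fin 3) :
    dampedExpect γ (pauli j) ![(a : ℂ), b] =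
      ((![2 * Real.sqrt (1 - γ) * a * b, 0, a ^ 2 - (1 - 2 * γ) * b ^ 2] j : ℝ) : ℂ) := by
  rw [dampedExpect, AD0_mulVec_ofReal, AD1_mulVec_ofReal, star_dotProduct_pauli_mulVec_ofReal,
    star_dotProduct_pauli_mulVec_ofReal, ← Complex.ofReal_add]
  congr 1
  fin_cases j <;>
    simp only [Fin.zero_eta, Fin.mk_one, Fin.reduceFinMk, cons_val_zero, cons_val_one, cons_val] <;>
    grind [Real.sq_sqrt hγ0, Real.sq_sqrt (sub_nonneg.mpr hγ1)]

end RealQubit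

lemma plusV_eq_ofReal : plusV = ![(((Real.sqrt 2)⁻¹ : ℝ) : ℂ), (((Real.sqrt 2)⁻¹ : ℝ) : ℂ)] := by
  simp [plusV]

lemma minusV_eq_ofReal : minusV = ![(((Real.sqrt 2)⁻¹ : ℝ) : ℂ), ((-(Real.sqrt 2)⁻¹ : ℝ) : ℂ)] := by
  simp [minusV]

def classicalState (t : ℝ) : Matrix (Fin 2 × Fin 2) (Fin 2 × Fin 2) ℂ :=
  (t : ℂ) • proj (tensorVec plusV plusV) + ((1 - t : ℝ) : ℂ) • proj (tensorVec minusV minusV)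

def ampDampBob (γ : ℝ) (ρ : Matrix (Fin 2 × Fin 2) (Fin 2 × Fin 2) ℂ) :
    Matrix (Fin 2 × Fin 2) (Fin 2 × Fin 2) ℂ :=
  ((1 : Matrix (Fin 2) (Fin 2) ℂ) ⊗ₖ AD0 γ) * ρ * ((1 : Matrix (Fin 2) (Fin 2) ℂ) ⊗ₖ AD0 γ)ᴴ +
    ((1 : Matrix (Fin 2) (Fin 2) ℂ) ⊗ₖ AD1 γ) * ρ * ((1 : Matrix (Fin 2) (Fin 2) ℂ) ⊗ₖ AD1 γ)ᴴ

lemma trace_ampDampBob_classicalState_mul_kronecker (t γ : ℝ) (P Q : Matrix (Fin 2) (Fin 2) ℂ) :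
    (ampDampBob γ (classicalState t) * (P ⊗ₖ Q)).trace =
      t * ((star plusV ⬝ᵥ (P *ᵥ plusV)) * dampedExpect γ Q plusV) +
        (1 - t : ℝ) * ((star minusV ⬝ᵥ (P *ᵥ minusV)) * dampedExpect γ Q minusV) := by
  simp only [ampDampBob, classicalState, Matrix.mul_add, Matrix.add_mul, Matrix.mul_smul,
    Matrix.smul_mul, trace_add, trace_smul, trace_kraus_proj_tensorVec_mul_kronecker,
    dampedExpect, smul_eq_mul]
  ring

lemma inv_sqrt_two_sq : (Real.sqrt 2)⁻¹ ^ 2 = 2⁻¹ := by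
  rw [inv_pow, Real.sq_sqrt zero_le_two]

section Bloch

variable {t γ : ℝ}

lemma re_trace_ampDampBob_classicalState_mul_pauli_kronecker_one (hγ0 : 0 ≤ γ) (hγ1 : γ ≤ 1)
    (i : Fin 3) :
    (ampDampBob γ (classicalState t) * (pauli i ⊗ₖ 1)).trace.re = ![2 * t - 1, 0, 0] i := by
  rw [trace_ampDampBob_classicalState_mul_kronecker, plusV_eq_ofReal, minusV_eq_ofReal,
    star_dotProduct_pauli_mulVec_ofReal, star_dotProduct_pauli_mulVec_ofReal,
    dampedExpect_one_ofReal _ _ hγ0 hγ1, dampedExpect_one_ofReal _ _ hγ0 hγ1]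
  simp only [← Complex.ofReal_mul, ← Complex.ofReal_add, Complex.ofReal_re]
  fin_cases i <;>
    simp only [Fin.zero_eta, Fin.mk_one, Fin.reduceFinMk, cons_val_zero, cons_val_one, cons_val] <;>
    grind [inv_sqrt_two_sq]

lemma re_trace_ampDampBob_classicalState_mul_one_kronecker_pauli (hγ0 : 0 ≤ γ) (hγ1 : γ ≤ 1)
    (j : Fin 3) :
    (ampDampBob γ (classicalState t) * (1 ⊗ₖ pauli j)).trace.re =
      ![Real.sqrt (1 - γ) * (2 * t - 1), 0, γ] j := by
  rw [trace_ampDampBob_classicalState_mul_kronecker, plusV_eq_ofReal, minusV_eq_ofReal, one_mulVec,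
    one_mulVec, star_dotProduct_self_ofReal, star_dotProduct_self_ofReal,
    dampedExpect_pauli_ofReal _ _ hγ0 hγ1, dampedExpect_pauli_ofReal _ _ hγ0 hγ1]
  simp only [← Complex.ofReal_mul, ← Complex.ofReal_add, Complex.ofReal_re]
  fin_cases j <;>
    simp only [Fin.zero_eta, Fin.mk_one, Fin.reduceFinMk, cons_val_zero, cons_val_one, cons_val] <;>
    grind [inv_sqrt_two_sq]

lemma re_trace_ampDampBob_classicalState_mul_pauli_kronecker_pauli (hγ0 : 0 ≤ γ) (hγ1 : γ ≤ 1)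
    (i j : Fin 3) :
    (ampDampBob γ (classicalState t) * (pauli i ⊗ₖ pauli j)).trace.re =
      !![Real.sqrt (1 - γ), 0, γ * (2 * t - 1); 0, 0, 0; 0, 0, 0] i j := by
  rw [trace_ampDampBob_classicalState_mul_kronecker, plusV_eq_ofReal, minusV_eq_ofReal,
    star_dotProduct_pauli_mulVec_ofReal, star_dotProduct_pauli_mulVec_ofReal,
    dampedExpect_pauli_ofReal _ _ hγ0 hγ1, dampedExpect_pauli_ofReal _ _ hγ0 hγ1]
  simp only [← Complex.ofReal_mul, ← Complex.ofReal_add, Complex.ofReal_re]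
  fin_cases i <;> fin_cases j <;>
    simp only [Fin.zero_eta, Fin.mk_one, Fin.reduceFinMk, cons_val_zero, cons_val_one, cons_val,
      of_apply] <;>
    grind [inv_sqrt_two_sq]

end Bloch

def steeredCoherence (a b : Fin 3 → ℝ) (T : Matrix (Fin 3) (Fin 3) ℝ) (m : Fin 3 → ℝ) : ℝ :=
  norm3 (cross3 (fun j => ∑ i, T i j * m i) (fun i => b i / norm3 b)) / |1 + dot3 a m|

lemma abs_le_one_of_norm3_eq_one {m : Fin 3 → ℝ} (hm : norm3 m = 1) (i : Fin 3) : |m i| ≤ 1 := by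
  rw [norm3, Real.sqrt_eq_one] at hm
  rw [← Real.sqrt_sq_eq_abs, ← Real.sqrt_one, ← hm]
  exact Real.sqrt_le_sqrt (Finset.single_le_sum (fun j _ => sq_nonneg (m j)) (Finset.mem_univ i))

lemma norm3_yAxis (x : ℝ) : norm3 ![0, x, 0] = |x| := by
  simp [norm3, Fin.sum_univ_three, Real.sqrt_sq_eq_abs]

section OneAxis

variable {q s g : ℝ}

lemma steeredCoherence_oneAxis (hq0 : 0 ≤ q) (hq1 : q ≤ 1) (hs : 0 ≤ s) (hg : 0 ≤ g)
    (m : Fin 3 → ℝ) :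
    steeredCoherence ![q, 0, 0] ![s * q, 0, g] !![s, 0, g * q; 0, 0, 0; 0, 0, 0] m =
      s * g * (1 + q) / Real.sqrt ((s * q) ^ 2 + g ^ 2) * ((1 - q) * |m 0| / |1 + q * m 0|) := by
  set N := Real.sqrt ((s * q) ^ 2 + g ^ 2)
  have hcross : cross3 (fun j => ∑ i, !![s, 0, g * q; 0, 0, 0; 0, 0, 0] i j * m i)
      (fun i => ![s * q, 0, g] i / norm3 ![s * q, 0, g]) =
        ![0, -(s * g * (1 + q) * (1 - q) / N * m 0), 0] := by
    have hb : norm3 ![s * q, 0, g] = N := by simp [norm3, Fin.sum_univ_three, N]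
    ext k
    fin_cases k <;>
      simp only [cross3, hb, Fin.sum_univ_three, of_apply, cons_val', cons_val_zero, cons_val_one,
        cons_val_fin_one, cons_val, Fin.zero_eta, Fin.mk_one, Fin.reduceFinMk] <;>
      ring
  have hdot : dot3 ![q, 0, 0] m = q * m 0 := by simp [dot3, Fin.sum_univ_three]
  rw [steeredCoherence, hcross, hdot, norm3_yAxis, abs_neg, abs_mul,
    abs_of_nonneg (by have := Real.sqrt_nonneg ((s * q) ^ 2 + g ^ 2); bound)]
  ring

lemma one_sub_mul_abs_div_le_one (hq0 : 0 ≤ q) {x : ℝ} (hx : |x| ≤ 1) :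
    (1 - q) * |x| / |1 + q * x| ≤ 1 := by
  apply div_le_one_of_le₀ _ (abs_nonneg _)
  calc (1 - q) * |x| ≤ 1 - q * |x| := by nlinarith
    _ = 1 + q * -|x| := by ring
    _ ≤ 1 + q * x := by gcongr; exact neg_abs_le x
    _ ≤ |1 + q * x| := le_abs_self _

theorem isGreatest_steeredCoherence_oneAxis (hq0 : 0 ≤ q) (hq1 : q < 1) (hs : 0 ≤ s) (hg : 0 ≤ g) :
    IsGreatest {c | ∃ m, norm3 m = 1 ∧
        c = steeredCoherence ![q, 0, 0] ![s * q, 0, g] !![s, 0, g * q; 0, 0, 0; 0, 0, 0] m}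
      (s * g * (1 + q) / Real.sqrt ((s * q) ^ 2 + g ^ 2)) := by
  have hC : 0 ≤ s * g * (1 + q) / Real.sqrt ((s * q) ^ 2 + g ^ 2) := by positivity
  refine ⟨⟨![-1, 0, 0], by simp [norm3, Fin.sum_univ_three], ?_⟩, ?_⟩
  · rw [steeredCoherence_oneAxis hq0 hq1.le hs hg]
    have h1q : 0 < 1 - q := sub_pos.mpr hq1
    simp [← sub_eq_add_neg, abs_of_pos h1q, h1q.ne']
  · rintro c ⟨m, hm, rfl⟩
    rw [steeredCoherence_oneAxis hq0 hq1.le hs hg]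
    exact mul_le_of_le_one_right hC
      (one_sub_mul_abs_div_le_one hq0 (abs_le_one_of_norm3_eq_one hm 0))

end OneAxis

/-- the maximal steered coherence of ρ_c = t|++⟩⟨++|+(1−t)|−−⟩⟨−−|
after Bob applies amplitude damping with parameter γ equals
2tγ√(1−γ)/√((1−2t)²(1−γ)+γ²); it vanishes at γ = 0, 1 and is positive in between. -/
theorem stmt6 (t γ : ℝ) (ht : 1 / 2 < t) (ht1 : t < 1) (hγ0 : 0 ≤ γ) (hγ1 : γ ≤ 1)
    (ρc ρ' : Matrix (Fin 2 × Fin 2) (Fin 2 × Fin 2) ℂ)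
    (hρc : ρc = (t : ℂ) • proj (tensorVec plusV plusV) +
      ((1 - t : ℝ) : ℂ) • proj (tensorVec minusV minusV))
    (hρ' : ρ' = ((1 : Matrix (Fin 2) (Fin 2) ℂ) ⊗ₖ AD0 γ) * ρc * ((1 : Matrix (Fin 2) (Fin 2) ℂ) ⊗ₖ AD0 γ)ᴴ +
      ((1 : Matrix (Fin 2) (Fin 2) ℂ) ⊗ₖ AD1 γ) * ρc * ((1 : Matrix (Fin 2) (Fin 2) ℂ) ⊗ₖ AD1 γ)ᴴ)
    (a b : Fin 3 → ℝ) (T : Matrix (Fin 3) (Fin 3) ℝ)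
    (ha : ∀ i, a i = ((ρ' * (pauli i ⊗ₖ 1)).trace).re)
    (hb : ∀ j, b j = ((ρ' * ((1 : Matrix (Fin 2) (Fin 2) ℂ) ⊗ₖ pauli j)).trace).re)
    (hT : ∀ i j, T i j = ((ρ' * (pauli i ⊗ₖ pauli j)).trace).re)
    (v : ℝ)
    (hv : v = 2 * t * γ * Real.sqrt (1 - γ) /
      Real.sqrt ((1 - 2 * t) ^ 2 * (1 - γ) + γ ^ 2)) :
    IsGreatest {c | ∃ m : Fin 3 → ℝ, norm3 m = 1 ∧
        c = norm3 (cross3 (fun j => ∑ i, T i j * m i) (fun i => b i / norm3 b)) /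
          |1 + dot3 a m|} v ∧
      (γ = 0 → v = 0) ∧ (γ = 1 → v = 0) ∧ (0 < γ → γ < 1 → 0 < v) := by
  have hρ : ρ' = ampDampBob γ (classicalState t) := by rw [hρ', hρc]; rfl
  obtain rfl : a = ![2 * t - 1, 0, 0] := funext fun i => by
    rw [ha, hρ, re_trace_ampDampBob_classicalState_mul_pauli_kronecker_one hγ0 hγ1]
  obtain rfl : b = ![Real.sqrt (1 - γ) * (2 * t - 1), 0, γ] := funext fun j => by
    rw [hb, hρ, re_trace_ampDampBob_classicalState_mul_one_kronecker_pauli hγ0 hγ1]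
  obtain rfl : T = !![Real.sqrt (1 - γ), 0, γ * (2 * t - 1); 0, 0, 0; 0, 0, 0] := by
    ext i j; rw [hT, hρ, re_trace_ampDampBob_classicalState_mul_pauli_kronecker_pauli hγ0 hγ1]
  have hv' : v = Real.sqrt (1 - γ) * γ * (1 + (2 * t - 1)) /
      Real.sqrt ((Real.sqrt (1 - γ) * (2 * t - 1)) ^ 2 + γ ^ 2) := by
    rw [hv, mul_pow, Real.sq_sqrt (by linarith)]; ring_nf
  refine ⟨hv' ▸ isGreatest_steeredCoherence_oneAxis (by linarith) (by linarith)
    (Real.sqrt_nonneg _) hγ0, fun h => by simp [hv, h], fun h => by simp [hv, h], fun h0 h1 => ?_⟩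
  rw [hv]
  have : 0 < Real.sqrt (1 - γ) := Real.sqrt_pos.mpr (by linarith)
  positivity
end
end

section
/- A unital qubit channel cannot increase maximal steered coherence: for a qubit Pauli channel Λ^u(σ) = Σ_{i=0}^{3} e_i σ_i σ σ_i with e_i ≥ 0, Σe_i = 1, which acts on Bloch vectors as b ↦ (p_1 b_1, p_2 b_2, p_3 b_3) with p_i ∈ [−1,1], and for any Bloch vectors b_M (steered state) and b ≠ 0 (reduced state), the coherence satisfies C(b_M', b') ≤ C(b_M, b), where b' and b_M' are the images under the channel (b' ≠ 0), and C(x, y) = |x × y|/|y|. -/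
set_option maxHeartbeats 1000000 in
lemma key (p1 p2 p3 x1 x2 x3 y1 y2 y3 : ℝ)
    (h1 : p1^2 ≤ 1) (h2 : p2^2 ≤ 1) (h3 : p3^2 ≤ 1)
    (hT : 0 < y1^2 + y2^2 + y3^2) :
    (((p2*x2)*(p3*y3) - (p3*x3)*(p2*y2))^2 + ((p3*x3)*(p1*y1) - (p1*x1)*(p3*y3))^2
      + ((p1*x1)*(p2*y2) - (p2*x2)*(p1*y1))^2) * (y1^2+y2^2+y3^2)
    ≤ ((x2*y3 - x3*y2)^2 + (x3*y1 - x1*y3)^2 + (x1*y2 - x2*y1)^2)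
      * ((p1*y1)^2+(p2*y2)^2+(p3*y3)^2) := by
  obtain ⟨l, hlT⟩ : ∃ l : ℝ, l * (y1^2+y2^2+y3^2) = x1*y1 + x2*y2 + x3*y3 :=
    ⟨(x1*y1 + x2*y2 + x3*y3) / (y1^2+y2^2+y3^2), div_mul_cancel₀ _ hT.ne'⟩
  have hT'0 : (0:ℝ) ≤ (p1*y1)^2+(p2*y2)^2+(p3*y3)^2 := by positivity
  have hS : (x2*y3 - x3*y2)^2 + (x3*y1 - x1*y3)^2 + (x1*y2 - x2*y1)^2
      = ((x1 - l*y1)^2 + (x2 - l*y2)^2 + (x3 - l*y3)^2) * (y1^2+y2^2+y3^2) := by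
    linear_combination (x1*y1 + x2*y2 + x3*y3 - l*(y1^2+y2^2+y3^2)) * hlT
  have hS'eq : ((p1*(x1 - l*y1))^2 + (p2*(x2 - l*y2))^2 + (p3*(x3 - l*y3))^2)
        * ((p1*y1)^2+(p2*y2)^2+(p3*y3)^2)
      - (((p2*x2)*(p3*y3) - (p3*x3)*(p2*y2))^2 + ((p3*x3)*(p1*y1) - (p1*x1)*(p3*y3))^2
      + ((p1*x1)*(p2*y2) - (p2*x2)*(p1*y1))^2)
      = ((p1*x1)*(p1*y1) + (p2*x2)*(p2*y2) + (p3*x3)*(p3*y3)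
          - l*((p1*y1)^2+(p2*y2)^2+(p3*y3)^2))^2 := by
    ring
  have hS' : (((p2*x2)*(p3*y3) - (p3*x3)*(p2*y2))^2 + ((p3*x3)*(p1*y1) - (p1*x1)*(p3*y3))^2
      + ((p1*x1)*(p2*y2) - (p2*x2)*(p1*y1))^2)
      ≤ ((p1*(x1 - l*y1))^2 + (p2*(x2 - l*y2))^2 + (p3*(x3 - l*y3))^2)
        * ((p1*y1)^2+(p2*y2)^2+(p3*y3)^2) := by
    nlinarith [hS'eq, sq_nonneg ((p1*x1)*(p1*y1) + (p2*x2)*(p2*y2) + (p3*x3)*(p3*y3)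
          - l*((p1*y1)^2+(p2*y2)^2+(p3*y3)^2))]
  have hz : (p1*(x1 - l*y1))^2 + (p2*(x2 - l*y2))^2 + (p3*(x3 - l*y3))^2
      ≤ (x1 - l*y1)^2 + (x2 - l*y2)^2 + (x3 - l*y3)^2 := by
    nlinarith [mul_nonneg (sub_nonneg.2 h1) (sq_nonneg (x1 - l*y1)),
      mul_nonneg (sub_nonneg.2 h2) (sq_nonneg (x2 - l*y2)),
      mul_nonneg (sub_nonneg.2 h3) (sq_nonneg (x3 - l*y3))]
  calc (((p2*x2)*(p3*y3) - (p3*x3)*(p2*y2))^2 + ((p3*x3)*(p1*y1) - (p1*x1)*(p3*y3))^2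
      + ((p1*x1)*(p2*y2) - (p2*x2)*(p1*y1))^2) * (y1^2+y2^2+y3^2)
      ≤ (((p1*(x1 - l*y1))^2 + (p2*(x2 - l*y2))^2 + (p3*(x3 - l*y3))^2)
          * ((p1*y1)^2+(p2*y2)^2+(p3*y3)^2)) * (y1^2+y2^2+y3^2) :=
        mul_le_mul_of_nonneg_right hS' hT.le
    _ ≤ (((x1 - l*y1)^2 + (x2 - l*y2)^2 + (x3 - l*y3)^2)
          * ((p1*y1)^2+(p2*y2)^2+(p3*y3)^2)) * (y1^2+y2^2+y3^2) :=
        mul_le_mul_of_nonneg_right (mul_le_mul_of_nonneg_right hz hT'0) hT.le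
    _ = ((x2*y3 - x3*y2)^2 + (x3*y1 - x1*y3)^2 + (x1*y2 - x2*y1)^2)
          * ((p1*y1)^2+(p2*y2)^2+(p3*y3)^2) := by rw [hS]; ring

open BigOperators

noncomputable section

lemma pos3 (v : Fin 3 → ℝ) (hv : v ≠ 0) : 0 < v 0 ^ 2 + v 1 ^ 2 + v 2 ^ 2 := by
  by_contra h
  push_neg at h
  apply hv
  have h0 : v 0 = 0 := by nlinarith [sq_nonneg (v 0), sq_nonneg (v 1), sq_nonneg (v 2)]
  have h1 : v 1 = 0 := by nlinarith [sq_nonneg (v 0), sq_nonneg (v 1), sq_nonneg (v 2)]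
  have h2 : v 2 = 0 := by nlinarith [sq_nonneg (v 0), sq_nonneg (v 1), sq_nonneg (v 2)]
  funext i
  fin_cases i <;> simpa

set_option maxHeartbeats 1000000 in
/-- a unital (Pauli) qubit channel, acting on Bloch vectors as
b ↦ (p₁b₁, p₂b₂, p₃b₃) with p_i built from the Pauli weights e_i, cannot increase
the coherence C(x, y) = |x × y|/|y| of a steered state x in the eigenbasis of y. -/
theorem stmt9 (e : Fin 4 → ℝ) (he : ∀ i, 0 ≤ e i) (hesum : ∑ i, e i = 1)
    (p : Fin 3 → ℝ)
    (hp1 : p 0 = e 0 + e 1 - e 2 - e 3)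
    (hp2 : p 1 = e 0 + e 2 - e 3 - e 1)
    (hp3 : p 2 = e 0 + e 3 - e 1 - e 2)
    (bM b : Fin 3 → ℝ) (hb : b ≠ 0)
    (bM' b' : Fin 3 → ℝ)
    (hbM' : bM' = fun i => p i * bM i) (hb' : b' = fun i => p i * b i)
    (hb'0 : b' ≠ 0) :
    norm3 (cross3 bM' b') / norm3 b' ≤ norm3 (cross3 bM b) / norm3 b := by
  subst hbM' hb'
  have hsum : e 0 + e 1 + e 2 + e 3 = 1 := by simpa [Fin.sum_univ_four] using hesum
  have hq1 : p 0 ^ 2 ≤ 1 := by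
    rw [hp1]
    nlinarith [mul_nonneg (add_nonneg (he 2) (he 3)) (add_nonneg (he 0) (he 1))]
  have hq2 : p 1 ^ 2 ≤ 1 := by
    rw [hp2]
    nlinarith [mul_nonneg (add_nonneg (he 3) (he 1)) (add_nonneg (he 0) (he 2))]
  have hq3 : p 2 ^ 2 ≤ 1 := by
    rw [hp3]
    nlinarith [mul_nonneg (add_nonneg (he 1) (he 2)) (add_nonneg (he 0) (he 3))]
  have hT : 0 < b 0 ^ 2 + b 1 ^ 2 + b 2 ^ 2 := pos3 b hb
  have hT' : 0 < (p 0 * b 0) ^ 2 + (p 1 * b 1) ^ 2 + (p 2 * b 2) ^ 2 := pos3 _ hb'0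
  have hkey := key (p 0) (p 1) (p 2) (bM 0) (bM 1) (bM 2) (b 0) (b 1) (b 2) hq1 hq2 hq3 hT
  simp only [norm3, cross3, Fin.sum_univ_three, Matrix.cons_val_zero, Matrix.cons_val_one,
    Matrix.head_cons, Matrix.cons_val_two, Matrix.tail_cons]
  rw [div_le_div_iff₀ (Real.sqrt_pos.2 (by linarith)) (Real.sqrt_pos.2 (by linarith)),
    ← Real.sqrt_mul (by positivity), ← Real.sqrt_mul (by positivity)]
  exact Real.sqrt_le_sqrt (by nlinarith [hkey])
end
end

section
/- For any canonical two-qubit state (Alice's marginal maximally mixed, a = 0) with correlation matrix T and Bob's Bloch vector b ≠ 0, the maximal steered coherence satisfies 𝒞(ρ) ≤ c_1 ≤ √(1 − |b|²), where c_1 is the largest singular value of T (the longest semiaxis of the steering ellipsoid). -/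
open Matrix BigOperators

noncomputable section

/-- Tᵀ m as a vector. -/
def Ttm (T : Matrix (Fin 3) (Fin 3) ℝ) (m : Fin 3 → ℝ) : Fin 3 → ℝ :=
  fun j => ∑ i, T i j * m i

lemma sum_sq_nonneg' (v : Fin 3 → ℝ) : 0 ≤ ∑ i, v i ^ 2 := by positivity

lemma norm3_nonneg (v : Fin 3 → ℝ) : 0 ≤ norm3 v := Real.sqrt_nonneg _

lemma norm3_sq (v : Fin 3 → ℝ) : norm3 v ^ 2 = ∑ i, v i ^ 2 :=
  Real.sq_sqrt (sum_sq_nonneg' v)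

lemma norm3_pos_of_ne_zero (v : Fin 3 → ℝ) (hv : v ≠ 0) : 0 < norm3 v := by
  rcases (norm3_nonneg v).lt_or_eq with h | h
  · exact h
  · exfalso
    apply hv
    have hs : ∑ i, v i ^ 2 = 0 := by
      have := norm3_sq v
      rw [← h] at this
      simpa using this.symm
    have := (Finset.sum_eq_zero_iff_of_nonneg (fun i _ => sq_nonneg (v i))).mp hs
    funext i
    have := this i (Finset.mem_univ i)
    exact pow_eq_zero_iff two_ne_zero |>.mp this

lemma cross_norm_le (u v : Fin 3 → ℝ) : norm3 (cross3 u v) ≤ norm3 u * norm3 v := by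
  have key : ∑ i, (cross3 u v) i ^ 2 ≤ (∑ i, u i ^ 2) * (∑ i, v i ^ 2) := by
    simp only [cross3, Fin.sum_univ_three]
    simp only [Matrix.cons_val_zero, Matrix.cons_val_one, Matrix.head_cons,
      Matrix.cons_val_two, Matrix.tail_cons]
    nlinarith [sq_nonneg (u 0 * v 0 + u 1 * v 1 + u 2 * v 2)]
  calc norm3 (cross3 u v) ≤ Real.sqrt ((∑ i, u i ^ 2) * (∑ i, v i ^ 2)) :=
        Real.sqrt_le_sqrt key
    _ = norm3 u * norm3 v := Real.sqrt_mul (sum_sq_nonneg' u) _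

/-- for a canonical two-qubit state (a = 0) whose steering ellipsoid
{b + Tᵀm : |m| ≤ 1} lies in the closed unit ball, the maximal steered coherence is
bounded by the largest singular value c₁ of T, which in turn is ≤ √(1 − |b|²). -/
theorem stmt10 (T : Matrix (Fin 3) (Fin 3) ℝ) (b : Fin 3 → ℝ) (hb : b ≠ 0)
    (hball : ∀ m : Fin 3 → ℝ, norm3 m ≤ 1 → norm3 (fun j => b j + Ttm T m j) ≤ 1)
    (c1 : ℝ) (hc1 : IsGreatest {s | ∃ m : Fin 3 → ℝ, norm3 m = 1 ∧ s = norm3 (Ttm T m)} c1) :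
    (∀ m : Fin 3 → ℝ, norm3 m = 1 →
        norm3 (cross3 (Ttm T m) b) / norm3 b ≤ c1) ∧
      c1 ≤ Real.sqrt (1 - (norm3 b) ^ 2) := by
  have hbpos : 0 < norm3 b := norm3_pos_of_ne_zero b hb
  constructor
  · intro m hm
    have hub : norm3 (Ttm T m) ≤ c1 := hc1.2 ⟨m, hm, rfl⟩
    rw [div_le_iff₀ hbpos]
    calc norm3 (cross3 (Ttm T m) b) ≤ norm3 (Ttm T m) * norm3 b := cross_norm_le _ _
      _ ≤ c1 * norm3 b := mul_le_mul_of_nonneg_right hub hbpos.le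
  · obtain ⟨m, hm, hc⟩ := hc1.1
    have hmneg : norm3 (-m) = 1 := by
      simpa [norm3, neg_sq] using hm
    have h1 : norm3 (fun j => b j + Ttm T m j) ≤ 1 := hball m hm.le
    have h2 : norm3 (fun j => b j - Ttm T m j) ≤ 1 := by
      have := hball (-m) hmneg.le
      have heq : (fun j => b j + Ttm T (-m) j) = (fun j => b j - Ttm T m j) := by
        funext j
        simp [Ttm, ← Finset.sum_neg_distrib, sub_eq_add_neg]
      rwa [heq] at this
    have h1' : ∑ j, (b j + Ttm T m j) ^ 2 ≤ 1 := by
      have := norm3_sq (fun j => b j + Ttm T m j)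
      nlinarith [norm3_nonneg (fun j => b j + Ttm T m j)]
    have h2' : ∑ j, (b j - Ttm T m j) ^ 2 ≤ 1 := by
      have := norm3_sq (fun j => b j - Ttm T m j)
      nlinarith [norm3_nonneg (fun j => b j - Ttm T m j)]
    have hkey : ∑ j, (Ttm T m j) ^ 2 ≤ 1 - ∑ j, b j ^ 2 := by
      simp only [Fin.sum_univ_three] at h1' h2' ⊢
      nlinarith
    rw [hc, norm3_sq]
    exact Real.sqrt_le_sqrt hkey
end
end

section
/- For the state ρ_can = (1/2)|ψ⟩⟨ψ|⊗|χ⟩⟨χ| + (1/2)|ψ̄⟩⟨ψ̄|⊗|χ'⟩⟨χ'| with ⟨ψ|ψ̄⟩ = 0 and |χ⟩, |χ'⟩ pure qubit states whose Bloch vectors χ, χ' are unit vectors satisfying χ + χ' = 2b with the chord χ − χ' perpendicular to b, the maximal steered coherence equals √(1 − |b|²), saturating the canonical-state bound. -/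
open BigOperators

noncomputable section

/-- for the canonical state ρ_can = ½|ψ⟩⟨ψ|⊗|χ⟩⟨χ| + ½|ψ̄⟩⟨ψ̄|⊗|χ'⟩⟨χ'|
whose steering ellipsoid is the chord from χ' to χ, perpendicular to b = (χ+χ')/2,
the maximal steered coherence equals √(1 − |b|²), saturating the canonical bound. -/
theorem stmt12 (χ χ' b : Fin 3 → ℝ)
    (hχ : norm3 χ = 1) (hχ' : norm3 χ' = 1)
    (hmid : ∀ i, χ i + χ' i = 2 * b i)
    (hperp : dot3 (fun i => χ i - χ' i) b = 0)
    (hb0 : 0 < norm3 b) (hb1 : norm3 b < 1) :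
    IsGreatest {c | ∃ t : ℝ, t ∈ Set.Icc (0 : ℝ) 1 ∧
        c = norm3 (cross3 (fun i => (1 - t) * χ' i + t * χ i) b) / norm3 b}
      (Real.sqrt (1 - (norm3 b) ^ 2)) ∧
    norm3 (cross3 χ b) / norm3 b = Real.sqrt (1 - (norm3 b) ^ 2) ∧
    norm3 (cross3 χ' b) / norm3 b = Real.sqrt (1 - (norm3 b) ^ 2) := by
  have hm : ∀ i, χ' i = 2 * b i - χ i := fun i => by have := hmid i; linarith
  have hbnn : (0:ℝ) ≤ ∑ i, b i ^ 2 := Finset.sum_nonneg fun i _ => sq_nonneg _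
  have hB2 : (norm3 b) ^ 2 = ∑ i, b i ^ 2 := by
    rw [norm3]; exact Real.sq_sqrt hbnn
  set B2 := ∑ i, b i ^ 2 with hB2def
  have hnb : norm3 b = Real.sqrt B2 := rfl
  have hB2e : B2 = b 0 ^ 2 + b 1 ^ 2 + b 2 ^ 2 := by
    rw [hB2def, Fin.sum_univ_three]
  have hχe : χ 0 ^ 2 + χ 1 ^ 2 + χ 2 ^ 2 = 1 := by
    have h := hχ
    rw [norm3, Real.sqrt_eq_one] at h
    rw [Fin.sum_univ_three] at h
    exact h
  have hB2pos : 0 < B2 := by nlinarith [hb0, hB2]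
  have hB2lt1 : B2 < 1 := by nlinarith [hb0, hb1, hB2]
  have h1B2 : (0:ℝ) ≤ 1 - B2 := by linarith
  have hcb : χ 0 * b 0 + χ 1 * b 1 + χ 2 * b 2 = B2 := by
    have h := hperp
    simp only [dot3, Fin.sum_univ_three, hm] at h
    rw [hB2e]; nlinarith [h]
  have hKe : ∑ i, (cross3 χ b) i ^ 2 = B2 * (1 - B2) := by
    have lag : (∑ i, (cross3 χ b) i ^ 2) + (χ 0 * b 0 + χ 1 * b 1 + χ 2 * b 2) ^ 2
        = (χ 0 ^ 2 + χ 1 ^ 2 + χ 2 ^ 2) * (b 0 ^ 2 + b 1 ^ 2 + b 2 ^ 2) := by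
      simp [cross3, Fin.sum_univ_three]; ring
    rw [hcb, hχe, ← hB2e, one_mul] at lag
    linear_combination lag
  have hKe' : ∑ i, (cross3 χ' b) i ^ 2 = B2 * (1 - B2) := by
    rw [← hKe]
    simp only [cross3, Fin.sum_univ_three, hm, Matrix.cons_val_zero, Matrix.cons_val_one, Matrix.head_cons, Matrix.cons_val_two, Matrix.tail_cons]
    ring
  have hKt : ∀ t : ℝ, ∑ i, (cross3 (fun i => (1 - t) * χ' i + t * χ i) b) i ^ 2
      = (2 * t - 1) ^ 2 * (B2 * (1 - B2)) := by
    intro t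
    rw [← hKe]
    simp only [cross3, Fin.sum_univ_three, hm, Matrix.cons_val_zero, Matrix.cons_val_one, Matrix.head_cons, Matrix.cons_val_two, Matrix.tail_cons]
    ring
  have hsb0 : Real.sqrt B2 ≠ 0 := (Real.sqrt_pos.mpr hB2pos).ne'
  have hdiv : norm3 (cross3 χ b) / norm3 b = Real.sqrt (1 - B2) := by
    rw [norm3, hKe, Real.sqrt_mul hB2pos.le, hnb, mul_comm, mul_div_assoc,
      div_self hsb0, mul_one]
  have hdiv' : norm3 (cross3 χ' b) / norm3 b = Real.sqrt (1 - B2) := by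
    rw [norm3, hKe', Real.sqrt_mul hB2pos.le, hnb, mul_comm, mul_div_assoc,
      div_self hsb0, mul_one]
  have hdivt : ∀ t : ℝ, norm3 (cross3 (fun i => (1 - t) * χ' i + t * χ i) b) / norm3 b
      = |2 * t - 1| * Real.sqrt (1 - B2) := by
    intro t
    rw [norm3, hKt t, Real.sqrt_mul (sq_nonneg _), Real.sqrt_sq_eq_abs,
      Real.sqrt_mul hB2pos.le, hnb]
    field_simp
  have hgoal : Real.sqrt (1 - (norm3 b) ^ 2) = Real.sqrt (1 - B2) := by rw [hB2]
  refine ⟨⟨?_, ?_⟩, ?_, ?_⟩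
  · -- membership: t = 1
    refine ⟨1, ⟨zero_le_one, le_refl 1⟩, ?_⟩
    rw [hdivt 1, hgoal]
    norm_num
  · -- upper bound
    rintro c ⟨t, ⟨ht0, ht1⟩, rfl⟩
    rw [hdivt t, hgoal]
    have habs : |2 * t - 1| ≤ 1 := abs_le.mpr ⟨by linarith, by linarith⟩
    nlinarith [Real.sqrt_nonneg (1 - B2), habs]
  · rw [hgoal]; exact hdiv
  · rw [hgoal]; exact hdiv'
end
end

section
/- If a two-qubit state ρ is an X state (nonzero entries only on the diagonal and anti-diagonal in the computational basis), then its Bloch vectors a, b both point along the z-axis and its correlation matrix T is block-diagonal with the z-axis an eigen-direction; consequently, when b ≠ 0, the maximal steered coherence equals the larger of the two semiaxis lengths of the steering ellipsoid orthogonal to the z-axis, namely max over unit m of |P_{xy}(Tᵀm)|/|1 + a·m| where P_{xy} projects onto the xy-plane. -/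
open Matrix BigOperators Kronecker ComplexOrder

noncomputable section

/-!
The expectation `tr (ρ (A ⊗ B))` is `∑ ρ x y (A ⊗ B) y x`. If one factor is diagonal and the other
has zero diagonal, only entries `ρ x y` whose indices agree in exactly one tensor factor contribute,
and these vanish for an X state. Since `σ_x, σ_y` have zero diagonal while `1, σ_z` are diagonal,
this kills `a_x, a_y, b_x, b_y` and `T_xz, T_yz, T_zx, T_zy`. Then `b / |b| = ±e_z`, and the cross
product with `±e_z` has the length of the projection onto the xy-plane.
-/

/-- For two qubits these are the X states: nonzero entries only on the diagonal and the
anti-diagonal. -/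
def IsXShaped {m n R : Type*} [Zero R] (ρ : Matrix (m × n) (m × n) R) : Prop :=
  ∀ x y : m × n, ρ x y ≠ 0 → x = y ∨ (x.1 ≠ y.1 ∧ x.2 ≠ y.2)

def IsHollow {n R : Type*} [Zero R] (B : Matrix n n R) : Prop := ∀ i, B i i = 0

section XShaped

variable {m n R : Type*} [NonUnitalNonAssocSemiring R] {ρ : Matrix (m × n) (m × n) R}

theorem IsXShaped.apply_eq_zero (hρ : IsXShaped ρ) {x y : m × n} (hxy : x ≠ y)
    (hshare : x.1 = y.1 ∨ x.2 = y.2) : ρ x y = 0 := by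
  by_contra h
  rcases hρ x y h with h' | ⟨h1, h2⟩
  · exact hxy h'
  · rcases hshare with h | h <;> contradiction

theorem IsXShaped.trace_mul_kronecker_diag_hollow [Fintype m] [Fintype n] (hρ : IsXShaped ρ)
    {A : Matrix m m R} {B : Matrix n n R} (hA : A.IsDiag) (hB : IsHollow B) :
    (ρ * (A ⊗ₖ B)).trace = 0 := by
  simp only [trace, diag, mul_apply]
  refine Fintype.sum_eq_zero _ fun x => Fintype.sum_eq_zero _ fun y => ?_
  rw [kroneckerMap_apply]
  by_cases h1 : y.1 = x.1
  · by_cases h2 : y.2 = x.2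
    · rw [h2, hB, mul_zero, mul_zero]
    · rw [hρ.apply_eq_zero (fun h => h2 (congrArg Prod.snd h).symm) (Or.inl h1.symm), zero_mul]
  · rw [hA h1, zero_mul, mul_zero]

theorem IsXShaped.trace_mul_kronecker_hollow_diag [Fintype m] [Fintype n] (hρ : IsXShaped ρ)
    {A : Matrix m m R} {B : Matrix n n R} (hA : IsHollow A) (hB : B.IsDiag) :
    (ρ * (A ⊗ₖ B)).trace = 0 := by
  simp only [trace, diag, mul_apply]
  refine Fintype.sum_eq_zero _ fun x => Fintype.sum_eq_zero _ fun y => ?_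
  rw [kroneckerMap_apply]
  by_cases h2 : y.2 = x.2
  · by_cases h1 : y.1 = x.1
    · rw [h1, hA, zero_mul, mul_zero]
    · rw [hρ.apply_eq_zero (fun h => h1 (congrArg Prod.fst h).symm) (Or.inr h2.symm), zero_mul]
  · rw [hB h2, mul_zero, mul_zero]

end XShaped

theorem isHollow_pauli_zero : IsHollow (pauli 0) := by
  intro i; fin_cases i <;> simp [pauli]

theorem isHollow_pauli_one : IsHollow (pauli 1) := by
  intro i; fin_cases i <;> simp [pauli]

theorem isDiag_pauli_two : (pauli 2).IsDiag := by
  intro i j h; fin_cases i <;> fin_cases j <;> simp_all [pauli]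

theorem norm3_of_eq_zero_of_eq_zero {v : Fin 3 → ℝ} (h0 : v 0 = 0) (h1 : v 1 = 0) :
    norm3 v = |v 2| := by
  simp [norm3, Fin.sum_univ_three, h0, h1, Real.sqrt_sq_eq_abs]

theorem norm3_cross3_of_sq_eq_one (u : Fin 3 → ℝ) {s : ℝ} (hs : s ^ 2 = 1) :
    norm3 (cross3 u ![0, 0, s]) = Real.sqrt (u 0 ^ 2 + u 1 ^ 2) := by
  have h1 : (u 1 * s) ^ 2 = u 1 ^ 2 := by rw [mul_pow, hs, mul_one]
  have h0 : (-(u 0 * s)) ^ 2 = u 0 ^ 2 := by rw [neg_sq, mul_pow, hs, mul_one]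
  simp [norm3, cross3, Fin.sum_univ_three, h0, h1, add_comm]

theorem norm3_cross3_normalize_of_z_axis {b : Fin 3 → ℝ} (hb0 : b 0 = 0) (hb1 : b 1 = 0)
    (hb2 : b 2 ≠ 0) (u : Fin 3 → ℝ) :
    norm3 (cross3 u (fun i => b i / norm3 b)) = Real.sqrt (u 0 ^ 2 + u 1 ^ 2) := by
  have hunit : (fun i => b i / norm3 b) = ![0, 0, b 2 / norm3 b] := by
    funext i; fin_cases i <;> simp [hb0, hb1]
  rw [hunit, norm3_cross3_of_sq_eq_one]
  rw [norm3_of_eq_zero_of_eq_zero hb0 hb1, div_pow, sq_abs, div_self (pow_ne_zero 2 hb2)]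

theorem stmt15_general (ρ : Matrix (Fin 2 × Fin 2) (Fin 2 × Fin 2) ℂ)
    (hX : ∀ x y : Fin 2 × Fin 2, ρ x y ≠ 0 → x = y ∨ (x.1 ≠ y.1 ∧ x.2 ≠ y.2))
    (a b : Fin 3 → ℝ) (T : Matrix (Fin 3) (Fin 3) ℝ)
    (ha : ∀ i, a i = ((ρ * (pauli i ⊗ₖ 1)).trace).re)
    (hb : ∀ j, b j = ((ρ * ((1 : Matrix (Fin 2) (Fin 2) ℂ) ⊗ₖ pauli j)).trace).re)
    (hT : ∀ i j, T i j = ((ρ * (pauli i ⊗ₖ pauli j)).trace).re)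
    (hbne : b ≠ 0) :
    a 0 = 0 ∧ a 1 = 0 ∧ b 0 = 0 ∧ b 1 = 0 ∧
    T 0 2 = 0 ∧ T 1 2 = 0 ∧ T 2 0 = 0 ∧ T 2 1 = 0 ∧
    sSup {c | ∃ m : Fin 3 → ℝ, norm3 m = 1 ∧
        c = norm3 (cross3 (fun j => ∑ i, T i j * m i) (fun i => b i / norm3 b)) /
          |1 + dot3 a m|} =
      sSup {c | ∃ m : Fin 3 → ℝ, norm3 m = 1 ∧
        c = Real.sqrt ((∑ i, T i 0 * m i) ^ 2 + (∑ i, T i 1 * m i) ^ 2) /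
          |1 + dot3 a m|} := by
  have hρ : IsXShaped ρ := hX
  have ha0 : a 0 = 0 := by
    rw [ha, hρ.trace_mul_kronecker_hollow_diag isHollow_pauli_zero isDiag_one, Complex.zero_re]
  have ha1 : a 1 = 0 := by
    rw [ha, hρ.trace_mul_kronecker_hollow_diag isHollow_pauli_one isDiag_one, Complex.zero_re]
  have hb0 : b 0 = 0 := by
    rw [hb, hρ.trace_mul_kronecker_diag_hollow isDiag_one isHollow_pauli_zero, Complex.zero_re]
  have hb1 : b 1 = 0 := by
    rw [hb, hρ.trace_mul_kronecker_diag_hollow isDiag_one isHollow_pauli_one, Complex.zero_re]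
  have hb2 : b 2 ≠ 0 := fun hb2 => hbne <| funext fun i => by fin_cases i <;> assumption
  refine ⟨ha0, ha1, hb0, hb1, ?_, ?_, ?_, ?_, ?_⟩
  · rw [hT, hρ.trace_mul_kronecker_hollow_diag isHollow_pauli_zero isDiag_pauli_two,
      Complex.zero_re]
  · rw [hT, hρ.trace_mul_kronecker_hollow_diag isHollow_pauli_one isDiag_pauli_two,
      Complex.zero_re]
  · rw [hT, hρ.trace_mul_kronecker_diag_hollow isDiag_pauli_two isHollow_pauli_zero,
      Complex.zero_re]
  · rw [hT, hρ.trace_mul_kronecker_diag_hollow isDiag_pauli_two isHollow_pauli_one,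
      Complex.zero_re]
  · simp_rw [norm3_cross3_normalize_of_z_axis hb0 hb1 hb2]

/-- for an X state, both Bloch vectors point along the z-axis, T is
block diagonal with the z-axis an eigen-direction, and (when b ≠ 0) the maximal
steered coherence equals the maximum of the xy-plane projection of Tᵀm over unit
vectors m (normalized by |1 + a·m|). -/
theorem stmt15 (ρ : Matrix (Fin 2 × Fin 2) (Fin 2 × Fin 2) ℂ)
    (hherm : ρ.IsHermitian) (hpsd : ρ.PosSemidef) (htr : ρ.trace = 1)
    (hX : ∀ x y : Fin 2 × Fin 2, ρ x y ≠ 0 → x = y ∨ (x.1 ≠ y.1 ∧ x.2 ≠ y.2))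
    (a b : Fin 3 → ℝ) (T : Matrix (Fin 3) (Fin 3) ℝ)
    (ha : ∀ i, a i = ((ρ * (pauli i ⊗ₖ 1)).trace).re)
    (hb : ∀ j, b j = ((ρ * ((1 : Matrix (Fin 2) (Fin 2) ℂ) ⊗ₖ pauli j)).trace).re)
    (hT : ∀ i j, T i j = ((ρ * (pauli i ⊗ₖ pauli j)).trace).re)
    (hbne : b ≠ 0) :
    a 0 = 0 ∧ a 1 = 0 ∧ b 0 = 0 ∧ b 1 = 0 ∧
    T 0 2 = 0 ∧ T 1 2 = 0 ∧ T 2 0 = 0 ∧ T 2 1 = 0 ∧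
    sSup {c | ∃ m : Fin 3 → ℝ, norm3 m = 1 ∧
        c = norm3 (cross3 (fun j => ∑ i, T i j * m i) (fun i => b i / norm3 b)) /
          |1 + dot3 a m|} =
      sSup {c | ∃ m : Fin 3 → ℝ, norm3 m = 1 ∧
        c = Real.sqrt ((∑ i, T i 0 * m i) ^ 2 + (∑ i, T i 1 * m i) ^ 2) /
          |1 + dot3 a m|} :=
  stmt15_general ρ hX a b T ha hb hT hbne
end
end

section
/- If ρ₁ = |Ψ₁⟩⟨Ψ₁| with |Ψ₁⟩ = √(1−(d−1)δ)|00⟩ + √δ Σ_{j=1}^{d−1}|jj⟩ for small δ > 0, then ρ₁ is a pure entangled state of full Schmidt rank d and its entanglement entropy E(ρ₁) = −(1−(d−1)δ)log(1−(d−1)δ) − (d−1)δ log δ tends to 0 as δ → 0⁺, while its maximal steered coherence equals the maximal value d − 1 for every δ ∈ (0, 1/(d−1)). Hence maximal steered coherence and entanglement entropy give different orderings of states. -/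
/-!
For a pure state with real Schmidt coefficients `c i`, steering by a POVM element `M` leaves
the unnormalised state `(M j i * c i * c j)_{ij}` on the second party. Positive semidefiniteness
gives `‖M j i‖ ≤ √(M i i) √(M j j)`, so with `a i = √(M i i) |c i|` the off-diagonal `l₁`-mass is
at most `∑_{i ≠ j} a i a j ≤ (d - 1) ∑ a i ^ 2 = (d - 1) · trace`. The bound is attained by the
rank-one projection onto the normalisation of `(1 / c i)_i`, which makes every entry of the
steered state equal. The entropy limit is continuity plus `ε log ε → 0`.
-/

open Matrix BigOperators Kronecker ComplexOrder

noncomputable section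

/-- The vector |Ψ₁⟩ = √(1−(d−1)δ)|00⟩ + √δ Σ_{j≥1} |jj⟩. -/
def Ψ1 (d : ℕ) (δ : ℝ) : Fin d × Fin d → ℂ := fun x =>
  if x.1 = x.2 then
    (if (x.1 : ℕ) = 0 then (Real.sqrt (1 - (d - 1) * δ) : ℂ) else (Real.sqrt δ : ℂ))
  else 0

lemma trace_eq_sum_ptraceA {dA dB : ℕ} (ρ : Matrix (Fin dA × Fin dB) (Fin dA × Fin dB) ℂ) :
    ρ.trace = ∑ j, ptraceA ρ j j := by
  rw [trace, Fintype.sum_prod_type, Finset.sum_comm]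
  rfl

namespace Matrix.PosSemidef

variable {n : Type*} {M : Matrix n n ℂ}

lemma norm_apply_sq_le (hM : M.PosSemidef) (i j : n) :
    ‖M i j‖ ^ 2 ≤ (M i i).re * (M j j).re := by
  have hdet := (hM.submatrix ![i, j]).det_nonneg
  rw [det_fin_two] at hdet
  simp only [submatrix_apply, Matrix.cons_val_zero, Matrix.cons_val_one] at hdet
  have hji : M j i = star (M i j) := (hM.1.apply j i).symm
  have hdiag : ∀ k, M k k = ((M k k).re : ℂ) := fun k =>
    (Complex.ext rfl (Complex.nonneg_iff.mp hM.diag_nonneg).2.symm)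
  rw [hji, RCLike.star_def, Complex.mul_conj', hdiag i, hdiag j] at hdet
  exact_mod_cast sub_nonneg.mp hdet

lemma norm_apply_le (hM : M.PosSemidef) (i j : n) :
    ‖M i j‖ ≤ √(M i i).re * √(M j j).re := by
  rw [← Real.sqrt_mul (Complex.nonneg_iff.mp hM.diag_nonneg).1]
  exact Real.le_sqrt_of_sq_le (hM.norm_apply_sq_le i j)

end Matrix.PosSemidef

open scoped MatrixOrder in
lemma posSemidef_one_sub_proj {n : Type*} [Fintype n] [DecidableEq n] {v : n → ℂ}
    (hv : star v ⬝ᵥ v = 1) : (1 - proj v).PosSemidef := by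
  have hP : IsStarProjection (proj v) :=
    ⟨by rw [IsIdempotentElem, proj, vecMulVec_mul_vecMulVec, hv, one_smul],
     by simp [IsSelfAdjoint, proj, star_eq_conjTranspose]⟩
  exact hP.one_sub.nonneg.posSemidef

lemma sum_sum_ne_mul_le {ι : Type*} [Fintype ι] [DecidableEq ι] (a : ι → ℝ) :
    ∑ i, ∑ j ∈ Finset.univ.filter (· ≠ i), a i * a j ≤ (Fintype.card ι - 1) * ∑ i, a i ^ 2 := by
  have hrow : ∀ i, ∑ j ∈ Finset.univ.filter (· ≠ i), a i * a j = a i * ∑ j, a j - a i ^ 2 := by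
    intro i
    rw [Finset.filter_ne', ← Finset.mul_sum, Finset.sum_erase_eq_sub (Finset.mem_univ i)]
    ring
  have hcs : (∑ i, a i) ^ 2 ≤ Fintype.card ι * ∑ i, a i ^ 2 := by
    simpa using sq_sum_le_card_mul_sum_sq (s := Finset.univ) (f := a)
  simp_rw [hrow]
  rw [Finset.sum_sub_distrib, ← Finset.sum_mul]
  linarith

def l1Coherence {n : Type*} [Fintype n] [DecidableEq n] (A : Matrix n n ℂ) : ℝ :=
  ∑ i, ∑ j ∈ Finset.univ.filter (· ≠ i), ‖A i j‖

def steeredCoherenceSet {d : ℕ} (ψ : Fin d × Fin d → ℂ) : Set ℝ :=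
  {x | ∃ M : Matrix (Fin d) (Fin d) ℂ,
    M.PosSemidef ∧ (1 - M).PosSemidef ∧
    0 < ((M ⊗ₖ (1 : Matrix (Fin d) (Fin d) ℂ)) * proj ψ).trace.re ∧
    x = l1Coherence (ptraceA ((M ⊗ₖ 1) * proj ψ)) /
      ((M ⊗ₖ (1 : Matrix (Fin d) (Fin d) ℂ)) * proj ψ).trace.re}

lemma l1Coherence_of_forall_eq {n : Type*} [Fintype n] [DecidableEq n] {A : Matrix n n ℂ} {z : ℂ}
    (hA : ∀ i j, A i j = z) : l1Coherence A = Fintype.card n * (Fintype.card n - 1) * ‖z‖ := by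
  have hrow : ∀ i : n, ∑ j ∈ Finset.univ.filter (· ≠ i), ‖A i j‖ = (Fintype.card n - 1) * ‖z‖ :=
    fun i => by
      rw [Finset.filter_ne', Finset.sum_congr rfl fun j _ => by rw [hA], Finset.sum_const,
        Finset.card_erase_of_mem (Finset.mem_univ i), Finset.card_univ, nsmul_eq_mul,
        Nat.cast_sub (Fintype.card_pos_iff.mpr ⟨i⟩), Nat.cast_one]
  simp only [l1Coherence, hrow, Finset.sum_const, Finset.card_univ, nsmul_eq_mul, mul_assoc]

section Schmidt

variable {d : ℕ} (c : Fin d → ℝ)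

def schmidtVec : Fin d × Fin d → ℂ := fun x => if x.1 = x.2 then (c x.2 : ℂ) else 0

lemma kronecker_one_mulVec_schmidtVec (M : Matrix (Fin d) (Fin d) ℂ) (p : Fin d × Fin d) :
    ((M ⊗ₖ (1 : Matrix (Fin d) (Fin d) ℂ)) *ᵥ schmidtVec c) p = M p.1 p.2 * c p.2 := by
  rw [mulVec, dotProduct, Finset.sum_eq_single (p.2, p.2)]
  · simp [schmidtVec]
  · rintro ⟨a, b⟩ - hab
    by_cases h : a = b
    · subst h
      have : p.2 ≠ a := fun h => hab (by rw [h])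
      simp [schmidtVec, one_apply_ne this]
    · simp [schmidtVec, h]
  · simp

lemma ptraceA_kronecker_one_mul_proj_schmidtVec (M : Matrix (Fin d) (Fin d) ℂ) (i j : Fin d) :
    ptraceA ((M ⊗ₖ (1 : Matrix (Fin d) (Fin d) ℂ)) * proj (schmidtVec c)) i j =
      M j i * c i * c j := by
  rw [ptraceA, proj, mul_vecMulVec, Finset.sum_eq_single j]
  · simp [vecMulVec_apply, kronecker_one_mulVec_schmidtVec, schmidtVec, mul_assoc]
  · intro a _ ha
    simp [vecMulVec_apply, schmidtVec, ha]
  · simp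

lemma trace_kronecker_one_mul_proj_schmidtVec (M : Matrix (Fin d) (Fin d) ℂ) :
    ((M ⊗ₖ (1 : Matrix (Fin d) (Fin d) ℂ)) * proj (schmidtVec c)).trace =
      ∑ i, M i i * c i * c i := by
  simp only [trace_eq_sum_ptraceA, ptraceA_kronecker_one_mul_proj_schmidtVec]

lemma l1Coherence_ptraceA_kronecker_one_mul_proj_schmidtVec_le {M : Matrix (Fin d) (Fin d) ℂ}
    (hM : M.PosSemidef) :
    l1Coherence (ptraceA ((M ⊗ₖ (1 : Matrix (Fin d) (Fin d) ℂ)) * proj (schmidtVec c))) ≤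
      (d - 1) * ((M ⊗ₖ (1 : Matrix (Fin d) (Fin d) ℂ)) * proj (schmidtVec c)).trace.re := by
  set a : Fin d → ℝ := fun i => √(M i i).re * |c i|
  have hentry : ∀ i j, ‖M j i * c i * c j‖ ≤ a i * a j := fun i j => by
    rw [norm_mul, norm_mul, Complex.norm_real, Complex.norm_real]
    calc ‖M j i‖ * ‖c i‖ * ‖c j‖ ≤ √(M j j).re * √(M i i).re * ‖c i‖ * ‖c j‖ := by
          gcongr; exact hM.norm_apply_le j i
      _ = a i * a j := by simp only [a, Real.norm_eq_abs]; ring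
  have htrace : ((M ⊗ₖ (1 : Matrix (Fin d) (Fin d) ℂ)) * proj (schmidtVec c)).trace.re =
      ∑ i, a i ^ 2 := by
    rw [trace_kronecker_one_mul_proj_schmidtVec, Complex.re_sum]
    refine Finset.sum_congr rfl fun i _ => ?_
    rw [mul_pow, Real.sq_sqrt (Complex.nonneg_iff.mp hM.diag_nonneg).1, sq_abs]
    simp [sq, mul_assoc]
  calc l1Coherence (ptraceA ((M ⊗ₖ (1 : Matrix (Fin d) (Fin d) ℂ)) * proj (schmidtVec c)))
      ≤ ∑ i, ∑ j ∈ Finset.univ.filter (· ≠ i), a i * a j := by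
        unfold l1Coherence
        gcongr with i _ j _
        rw [ptraceA_kronecker_one_mul_proj_schmidtVec]
        exact hentry i j
    _ ≤ (d - 1) * ∑ i, a i ^ 2 := by simpa using sum_sum_ne_mul_le a
    _ = _ := by rw [htrace]

lemma upperBounds_steeredCoherenceSet_schmidtVec :
    (d - 1 : ℝ) ∈ upperBounds (steeredCoherenceSet (schmidtVec c)) := by
  rintro x ⟨M, hM, -, htr, rfl⟩
  rw [div_le_iff₀ htr]
  exact l1Coherence_ptraceA_kronecker_one_mul_proj_schmidtVec_le c hM

lemma mem_steeredCoherenceSet_schmidtVec (hd : 0 < d) (hc : ∀ i, c i ≠ 0) :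
    (d - 1 : ℝ) ∈ steeredCoherenceSet (schmidtVec c) := by
  set t : ℝ := (√(∑ i, (c i)⁻¹ ^ 2))⁻¹
  have hsum : 0 < ∑ i, (c i)⁻¹ ^ 2 :=
    Finset.sum_pos (fun i _ => by have := hc i; positivity) ⟨⟨0, hd⟩, Finset.mem_univ _⟩
  have ht : 0 < t := by positivity
  set v : Fin d → ℂ := fun i => (t / c i : ℝ)
  have hv : star v ⬝ᵥ v = 1 := by
    have : ∑ i, (t / c i) ^ 2 = 1 :=
      calc ∑ i, (t / c i) ^ 2 = t ^ 2 * ∑ i, (c i)⁻¹ ^ 2 := by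
            simp_rw [Finset.mul_sum, div_eq_mul_inv, mul_pow]
        _ = 1 := by rw [inv_pow, Real.sq_sqrt hsum.le, inv_mul_cancel₀ hsum.ne']
    simp only [dotProduct, Pi.star_apply, v, Complex.star_def, Complex.conj_ofReal]
    exact_mod_cast (by simpa [sq] using this)
  have hentry : ∀ i j,
      ptraceA ((proj v ⊗ₖ (1 : Matrix (Fin d) (Fin d) ℂ)) * proj (schmidtVec c)) i j = (t ^ 2 : ℝ) :=
    fun i j => by
      rw [ptraceA_kronecker_one_mul_proj_schmidtVec]
      simp only [proj, vecMulVec_apply, Pi.star_apply, v, Complex.ofReal_div, star_div₀,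
        RCLike.star_def, Complex.conj_ofReal, Complex.ofReal_pow]
      field_simp [hc i, hc j]
  have htrace : ((proj v ⊗ₖ (1 : Matrix (Fin d) (Fin d) ℂ)) * proj (schmidtVec c)).trace.re =
      d * t ^ 2 := by
    rw [trace_eq_sum_ptraceA, Complex.re_sum]
    simp only [hentry, Complex.ofReal_re, Finset.sum_const, Finset.card_univ, Fintype.card_fin,
      nsmul_eq_mul]
  refine ⟨proj v, posSemidef_vecMulVec_self_star v, posSemidef_one_sub_proj hv, ?_, ?_⟩
  · rw [htrace]; positivity
  · rw [htrace, l1Coherence_of_forall_eq hentry, Fintype.card_fin, Complex.norm_real,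
      Real.norm_of_nonneg (by positivity)]
    field_simp

lemma isGreatest_steeredCoherenceSet_schmidtVec (hd : 0 < d) (hc : ∀ i, c i ≠ 0) :
    IsGreatest (steeredCoherenceSet (schmidtVec c)) (d - 1) :=
  ⟨mem_steeredCoherenceSet_schmidtVec c hd hc, upperBounds_steeredCoherenceSet_schmidtVec c⟩

end Schmidt

lemma tendsto_entropy_nhdsGT_zero (k : ℝ) :
    Filter.Tendsto (fun ε : ℝ => -(1 - k * ε) * Real.log (1 - k * ε) - k * ε * Real.log ε)
      (nhdsWithin 0 (Set.Ioi 0)) (nhds 0) := by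
  have hmain : ContinuousAt (fun ε : ℝ => -(1 - k * ε) * Real.log (1 - k * ε)) 0 :=
    ContinuousAt.mul (by fun_prop) ((Real.continuousAt_log (by norm_num)).comp (by fun_prop))
  have hsmall : Filter.Tendsto (fun ε : ℝ => k * ε * Real.log ε)
      (nhdsWithin 0 (Set.Ioi 0)) (nhds 0) := by
    simpa [mul_assoc, mul_comm (Real.log _)] using
      (tendsto_log_mul_rpow_nhdsGT_zero one_pos).const_mul k
  simpa using (hmain.tendsto.mono_left nhdsWithin_le_nhds).sub hsmall

lemma Ψ1_eq_schmidtVec (d : ℕ) (δ : ℝ) :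
    Ψ1 d δ = schmidtVec fun i : Fin d => if (i : ℕ) = 0 then √(1 - (d - 1) * δ) else √δ := by
  ext x
  by_cases h : x.1 = x.2 <;> simp [Ψ1, schmidtVec, h, apply_ite Complex.ofReal]

/-- the entanglement entropy of ρ₁ = |Ψ₁⟩⟨Ψ₁| tends to 0 as δ → 0⁺,
while the maximal steered coherence of ρ₁ (in the eigenbasis of ρ_B, here the
standard basis) equals the maximal value d − 1 for every δ ∈ (0, 1/(d−1)). -/
theorem stmt16 (d : ℕ) (hd : 2 ≤ d) (δ : ℝ) (hδ0 : 0 < δ) (hδ1 : δ < 1 / (d - 1 : ℝ)) :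
    Filter.Tendsto
      (fun ε : ℝ => -(1 - (d - 1 : ℝ) * ε) * Real.log (1 - (d - 1 : ℝ) * ε) -
        (d - 1 : ℝ) * ε * Real.log ε)
      (nhdsWithin 0 (Set.Ioi 0)) (nhds 0) ∧
    IsGreatest {c | ∃ M : Matrix (Fin d) (Fin d) ℂ,
        M.PosSemidef ∧ ((1 : Matrix (Fin d) (Fin d) ℂ) - M).PosSemidef ∧
        0 < (((M ⊗ₖ (1 : Matrix (Fin d) (Fin d) ℂ)) * proj (Ψ1 d δ)).trace).re ∧
        c = (∑ i, ∑ j ∈ Finset.univ.filter (· ≠ i),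
            ‖ptraceA ((M ⊗ₖ 1) * proj (Ψ1 d δ)) i j‖) /
          (((M ⊗ₖ (1 : Matrix (Fin d) (Fin d) ℂ)) * proj (Ψ1 d δ)).trace).re}
      ((d : ℝ) - 1) := by
  have hd1 : (0 : ℝ) < d - 1 := by
    have : (2 : ℝ) ≤ d := by exact_mod_cast hd
    linarith
  have hδ : (d - 1) * δ < 1 := by rwa [lt_div_iff₀ hd1, mul_comm] at hδ1
  refine ⟨tendsto_entropy_nhdsGT_zero _, ?_⟩
  change IsGreatest (steeredCoherenceSet (Ψ1 d δ)) _
  rw [Ψ1_eq_schmidtVec]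
  refine isGreatest_steeredCoherenceSet_schmidtVec _ (by omega) fun i => ?_
  split_ifs
  · exact (Real.sqrt_pos.mpr (by linarith)).ne'
  · exact (Real.sqrt_pos.mpr hδ0).ne'
end
end
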